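/- Let ω⋆ ∈ (0,1), δ = 1 − ω⋆, and let τ_A = γ⋆ − 1 as in the ADMM optimal rate (γ⋆ = 4/(3 − √((2−ρ⋆)/(2+ρ⋆))), ρ⋆ = 2√(1−(ω⋆)²)). Let τ_G ∈ (0,1) satisfy (1−δ)/(1+δ) ≤ τ_G ≤ (2Δ−δ)/(2Δ+δ) for some Δ ≥ 1. Then there exists C = 1 − O(√δ) (as δ → 0) such that C(1 − τ_G) ≤ (1 − τ_A)² ≤ 2ΔC(1 − τ_G). -/

import Mathlib

/-!
Write `u = √(1 - ω²)` and `s = √((1 - u)/(1 + u))`, so that `1 - τ_A = 2(1 - s)/(3 - s)`.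
Then `ω = s(1 + u)`, which gives the key identity `(1 - s)² = δ(1 + s²)` with `δ = 1 - ω`.
The Laplacian comparison bounds on `τ_G` sandwich `(1 - τ_A)²` as claimed for
`C = (1 - τ_A)² (1 + δ)/(2δ)`, and the key identity turns this into `C = 4(1 - s + s²)/(3 - s)²`,
so that `0 ≤ 1 - C ≤ 2(1 - s) ≤ 2√(2δ) ≤ 3√δ`.
-/

/-- Optimal ADMM rate as a function of ω⋆. -/
noncomputable def tauAofOmega (ω : ℝ) : ℝ :=
  4 / (3 - Real.sqrt ((2 - 2 * Real.sqrt (1 - ω^2)) /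
        (2 + 2 * Real.sqrt (1 - ω^2)))) - 1

open Real

/-- The square root `√((2 - ρ⋆)/(2 + ρ⋆))` in the ADMM rate, with `ρ⋆ = 2√(1 - ω²)`. -/
noncomputable def admmRatio (ω : ℝ) : ℝ :=
  √((2 - 2 * √(1 - ω ^ 2)) / (2 + 2 * √(1 - ω ^ 2)))

section admmRatio

variable (ω : ℝ)

lemma sqrt_one_sub_sq_le_one : √(1 - ω ^ 2) ≤ 1 :=
  sqrt_le_one.mpr (by nlinarith [sq_nonneg ω])

lemma admmRatio_nonneg : 0 ≤ admmRatio ω := sqrt_nonneg _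

lemma admmRatio_sq_mul : admmRatio ω ^ 2 * (1 + √(1 - ω ^ 2)) = 1 - √(1 - ω ^ 2) := by
  have hu0 := sqrt_nonneg (1 - ω ^ 2)
  have hu1 := sqrt_one_sub_sq_le_one ω
  rw [admmRatio, sq_sqrt (div_nonneg (by linarith) (by linarith))]
  field_simp

lemma admmRatio_le_one : admmRatio ω ≤ 1 := by
  have hu0 := sqrt_nonneg (1 - ω ^ 2)
  nlinarith [admmRatio_sq_mul ω, admmRatio_nonneg ω]

lemma one_sub_tauAofOmega :
    1 - tauAofOmega ω = 2 * (1 - admmRatio ω) / (3 - admmRatio ω) := by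
  have h3 : 3 - admmRatio ω ≠ 0 := by linarith [admmRatio_le_one ω]
  rw [tauAofOmega, ← admmRatio]
  field_simp
  ring

variable {ω}

lemma admmRatio_mul (h0 : 0 ≤ ω) (h1 : ω ≤ 1) : admmRatio ω * (1 + √(1 - ω ^ 2)) = ω := by
  have hu0 := sqrt_nonneg (1 - ω ^ 2)
  have hu2 : √(1 - ω ^ 2) ^ 2 = 1 - ω ^ 2 := sq_sqrt (by nlinarith)
  refine (pow_left_inj₀ (by positivity [admmRatio_nonneg ω]) h0 two_ne_zero).mp ?_
  linear_combination (1 + √(1 - ω ^ 2)) * admmRatio_sq_mul ω - hu2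

lemma one_sub_admmRatio_sq (h0 : 0 ≤ ω) (h1 : ω ≤ 1) :
    (1 - admmRatio ω) ^ 2 = (1 - ω) * (1 + admmRatio ω ^ 2) := by
  have hu : 0 < 1 + √(1 - ω ^ 2) := by positivity
  refine mul_right_cancel₀ hu.ne' ?_
  linear_combination ω * admmRatio_sq_mul ω - 2 * admmRatio_mul h0 h1

end admmRatio

section sandwich

variable {r δ τ : ℝ}

lemma mul_one_add_div_mul_one_sub_le (hr : 0 ≤ r) (hδ : 0 < δ) (h : (1 - δ) / (1 + δ) ≤ τ) :
    r * ((1 + δ) / (2 * δ)) * (1 - τ) ≤ r := by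
  rw [div_le_iff₀ (by linarith)] at h
  have hC : (1 + δ) / (2 * δ) * (1 - τ) ≤ 1 := by
    rw [div_mul_eq_mul_div, div_le_one (by linarith)]
    linarith
  calc r * ((1 + δ) / (2 * δ)) * (1 - τ) = r * ((1 + δ) / (2 * δ) * (1 - τ)) := by ring
    _ ≤ r := mul_le_of_le_one_right hr hC

lemma le_two_mul_mul_one_add_div_mul_one_sub {Δ : ℝ} (hr : 0 ≤ r) (hδ : 0 < δ)
    (hΔ : 1 / 2 ≤ Δ) (h : τ ≤ (2 * Δ - δ) / (2 * Δ + δ)) :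
    r ≤ 2 * Δ * (r * ((1 + δ) / (2 * δ))) * (1 - τ) := by
  rw [le_div_iff₀ (by linarith)] at h
  have key : 2 * δ ≤ 2 * Δ * (1 + δ) * (1 - τ) := by
    nlinarith [mul_nonneg (by linarith : 0 ≤ 2 * Δ - 1) hδ.le]
  have hC : 1 ≤ 2 * Δ * ((1 + δ) / (2 * δ)) * (1 - τ) := by
    calc 1 = 2 * δ / (2 * δ) := (div_self (by positivity)).symm
      _ ≤ 2 * Δ * (1 + δ) * (1 - τ) / (2 * δ) := by gcongr
      _ = 2 * Δ * ((1 + δ) / (2 * δ)) * (1 - τ) := by ring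
  calc r ≤ r * (2 * Δ * ((1 + δ) / (2 * δ)) * (1 - τ)) := le_mul_of_one_le_right hr hC
    _ = 2 * Δ * (r * ((1 + δ) / (2 * δ))) * (1 - τ) := by ring

end sandwich

section constant

variable {s δ : ℝ}

lemma rate_sq_mul_one_add_div (hδ : δ ≠ 0) (hs : s ≠ 3) (h : (1 - s) ^ 2 = δ * (1 + s ^ 2)) :
    (2 * (1 - s) / (3 - s)) ^ 2 * ((1 + δ) / (2 * δ)) = 4 * (1 - s + s ^ 2) / (3 - s) ^ 2 := by
  have h3 : 3 - s ≠ 0 := sub_ne_zero.mpr hs.symm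
  field_simp
  linear_combination 2 * h

lemma abs_one_sub_four_mul_div_le (h0 : 0 ≤ s) (h1 : s ≤ 1) :
    |1 - 4 * (1 - s + s ^ 2) / (3 - s) ^ 2| ≤ 2 * (1 - s) := by
  have h3 : 3 - s ≠ 0 := by linarith
  have hC : 1 - 4 * (1 - s + s ^ 2) / (3 - s) ^ 2 = (1 - s) * (5 + 3 * s) / (3 - s) ^ 2 := by
    field_simp
    ring
  rw [hC, abs_of_nonneg (div_nonneg (by nlinarith) (sq_nonneg _)), div_le_iff₀ (by positivity)]
  nlinarith [mul_nonneg (sub_nonneg.mpr h1) (sub_nonneg.mpr h1)]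

lemma two_mul_one_sub_le_three_mul_sqrt (h0 : 0 ≤ s) (h1 : s ≤ 1) (hδ : 0 ≤ δ)
    (h : (1 - s) ^ 2 = δ * (1 + s ^ 2)) : 2 * (1 - s) ≤ 3 * √δ := by
  have hsq : (2 * (1 - s)) ^ 2 ≤ (3 * √δ) ^ 2 := by
    rw [mul_pow, mul_pow, sq_sqrt hδ, h]
    nlinarith [mul_le_mul_of_nonneg_left (pow_le_one₀ h0 h1 : s ^ 2 ≤ 1) hδ]
  exact (pow_le_pow_iff_left₀ (by linarith) (by positivity) two_ne_zero).mp hsq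

end constant

/-- ADMM speedup: there is an absolute constant K and a threshold δ₀ such that whenever the
spectral gap δ = 1 − ω⋆ is below δ₀, for every degree ratio Δ ≥ 1 and every τ_G ∈ (0,1)
satisfying the Laplacian comparison bounds, there is C with |1 − C| ≤ K√δ and
C(1 − τ_G) ≤ (1 − τ_A)² ≤ 2ΔC(1 − τ_G). -/
theorem stmt19 :
    ∃ K > (0 : ℝ), ∃ δ₀ > (0 : ℝ), ∀ ω : ℝ, ω ∈ Set.Ioo (0 : ℝ) 1 → 1 - ω < δ₀ →
      ∀ Δ : ℝ, 1 ≤ Δ → ∀ τG ∈ Set.Ioo (0 : ℝ) 1,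
        (1 - (1 - ω)) / (1 + (1 - ω)) ≤ τG →
        τG ≤ (2 * Δ - (1 - ω)) / (2 * Δ + (1 - ω)) →
        ∃ C : ℝ, |1 - C| ≤ K * Real.sqrt (1 - ω) ∧
          C * (1 - τG) ≤ (1 - tauAofOmega ω)^2 ∧
          (1 - tauAofOmega ω)^2 ≤ 2 * Δ * C * (1 - τG) := by
  refine ⟨3, by norm_num, 1, one_pos, ?_⟩
  rintro ω ⟨hω0, hω1⟩ - Δ hΔ τG - hlow hup
  have hδ : 0 < 1 - ω := sub_pos.mpr hω1
  have hs0 := admmRatio_nonneg ω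
  have hs1 := admmRatio_le_one ω
  have hkey := one_sub_admmRatio_sq hω0.le hω1.le
  refine ⟨(1 - tauAofOmega ω) ^ 2 * ((1 + (1 - ω)) / (2 * (1 - ω))), ?_,
    mul_one_add_div_mul_one_sub_le (sq_nonneg _) hδ hlow,
    le_two_mul_mul_one_add_div_mul_one_sub (sq_nonneg _) hδ (by linarith) hup⟩
  rw [one_sub_tauAofOmega, rate_sq_mul_one_add_div hδ.ne' (by linarith) hkey]
  exact (abs_one_sub_four_mul_div_le hs0 hs1).trans
    (two_mul_one_sub_le_three_mul_sqrt hs0 hs1 hδ.le hkey)
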